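/- Let G be a δ-regular graph on n vertices with adjacency matrix A, let k be an even positive integer, and W_k = max_u Σ_{j=1}^{k} (A^j)_{uu}. Then α_k(G) ≤ n · (W_k + 1/2) / (Σ_{j=1}^{k} δ^j + 1/2). -/

import Mathlib

open Polynomial Matrix Finset
open scoped Classical

/-- The `k`-independence number: maximum size of a set of vertices pairwise at
distance greater than `k` (every walk between distinct members has length `> k`). -/
noncomputable def kIndepNum {n : ℕ} (G : SimpleGraph (Fin n)) (k : ℕ) : ℕ :=
  sSup {m | ∃ s : Finset (Fin n),
    (∀ u ∈ s, ∀ v ∈ s, u ≠ v → ∀ w : G.Walk u v, k < w.length) ∧ s.card = m}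

/-- The polynomial `x + x^2 + ⋯ + x^k` is at least `-1/2` for even `k`. -/
lemma aux_scalar_bound {k : ℕ} (hk : Even k) (x : ℝ) :
    0 ≤ (∑ j ∈ Finset.Icc 1 k, x ^ j) + 1 / 2 := by
  rcases le_or_gt 0 x with hx | hx
  · have h0 : 0 ≤ ∑ j ∈ Finset.Icc 1 k, x ^ j :=
      Finset.sum_nonneg fun j _ => pow_nonneg hx j
    linarith
  · have hgeo : (∑ i ∈ Finset.range (k + 1), x ^ i) * (x - 1) = x ^ (k + 1) - 1 :=
      geom_sum_mul x (k + 1)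
    have hins : insert 0 (Finset.Icc 1 k) = Finset.range (k + 1) := by
      ext j; simp [Nat.lt_succ_iff]; omega
    set s := ∑ j ∈ Finset.Icc 1 k, x ^ j with hs
    have h0 : ∑ i ∈ Finset.range (k + 1), x ^ i = 1 + s := by
      rw [← hins, Finset.sum_insert (by simp)]; simp [hs]
    rw [h0] at hgeo
    have key : s * (x - 1) = x * x ^ k - x := by linear_combination hgeo
    have ht0 : 0 ≤ x ^ k := hk.pow_nonneg x
    rcases le_or_gt x (-1) with hx2 | hx2
    · have ht1 : (1 : ℝ) ≤ x ^ k := by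
        have habs : (1 : ℝ) ≤ |x| := by
          rw [abs_of_nonpos (by linarith)]; linarith
        calc (1 : ℝ) = 1 ^ k := (one_pow k).symm
        _ ≤ |x| ^ k := pow_le_pow_left₀ zero_le_one habs k
        _ = x ^ k := hk.pow_abs x
      nlinarith [key, mul_nonneg (by linarith : (0:ℝ) ≤ -x) (by linarith : (0:ℝ) ≤ x ^ k - 1)]
    · nlinarith [key, mul_nonneg (by linarith : (0:ℝ) ≤ -x) ht0]

lemma aux_sum_mulVec {N : ℕ} {ι : Type*} (t : Finset ι) (M : ι → Matrix (Fin N) (Fin N) ℝ)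
    (v : Fin N → ℝ) : (∑ i ∈ t, M i) *ᵥ v = ∑ i ∈ t, (M i *ᵥ v) := by
  ext x
  simp only [Matrix.mulVec, dotProduct, Matrix.sum_apply, Finset.sum_apply,
    Finset.sum_mul]
  exact Finset.sum_comm

lemma aux_diagonal_sum {N : ℕ} {ι : Type*} (t : Finset ι) (f : ι → Fin N → ℝ) :
    (∑ i ∈ t, Matrix.diagonal (f i)) = Matrix.diagonal (fun x => ∑ i ∈ t, f i x) := by
  ext a b
  by_cases h : a = b <;> simp [Matrix.sum_apply, Matrix.diagonal_apply, h]

/-- If `q(x) = x + ⋯ + x^k + 1/2` is nonnegative on ℝ and `A` is real symmetric,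
then `q(A)` is positive semidefinite. -/
lemma aux_psd {N k : ℕ} (A : Matrix (Fin N) (Fin N) ℝ) (hA : A.IsHermitian)
    (hq : ∀ x : ℝ, 0 ≤ (∑ j ∈ Finset.Icc 1 k, x ^ j) + 1 / 2) :
    Matrix.PosSemidef ((∑ j ∈ Finset.Icc 1 k, A ^ j) + (1 / 2 : ℝ) • 1) := by
  set V : Matrix (Fin N) (Fin N) ℝ := (hA.eigenvectorUnitary : Matrix (Fin N) (Fin N) ℝ)
    with hVdef
  have h1 : V * star V = 1 := (Matrix.mem_unitaryGroup_iff).mp hA.eigenvectorUnitary.2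
  have h2 : star V * V = 1 := (Matrix.mem_unitaryGroup_iff').mp hA.eigenvectorUnitary.2
  have hAspec : A = V * Matrix.diagonal hA.eigenvalues * star V := by
    have h := hA.spectral_theorem
    simpa [RCLike.ofReal_real_eq_id, Function.comp] using h
  have hconj : ∀ (D : Matrix (Fin N) (Fin N) ℝ) (j : ℕ),
      (V * D * star V) ^ j = V * D ^ j * star V := by
    intro D j
    induction j with
    | zero => rw [pow_zero, pow_zero, mul_one, h1]
    | succ j ih =>
      rw [pow_succ, ih]
      calc V * D ^ j * star V * (V * D * star V)
          = V * D ^ j * (star V * V) * D * star V := by simp only [mul_assoc]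
        _ = V * (D ^ j * D) * star V := by rw [h2, mul_one]; simp only [mul_assoc]
        _ = V * D ^ (j + 1) * star V := by rw [← pow_succ]
  have hpow : ∀ j : ℕ, A ^ j = V * (Matrix.diagonal hA.eigenvalues) ^ j * star V := by
    intro j
    conv_lhs => rw [hAspec]
    exact hconj _ j
  have hrw : (∑ j ∈ Finset.Icc 1 k, A ^ j) + (1 / 2 : ℝ) • 1
      = V * Matrix.diagonal
          (fun i => (∑ j ∈ Finset.Icc 1 k, hA.eigenvalues i ^ j) + 1 / 2) * star V := by
    have e1 : (∑ j ∈ Finset.Icc 1 k, A ^ j)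
        = V * (∑ j ∈ Finset.Icc 1 k, Matrix.diagonal (fun i => hA.eigenvalues i ^ j))
          * star V := by
      rw [Finset.mul_sum, Finset.sum_mul]
      refine Finset.sum_congr rfl fun j _ => ?_
      rw [hpow j, Matrix.diagonal_pow]
      congr 2
    have e2 : (1 / 2 : ℝ) • (1 : Matrix (Fin N) (Fin N) ℝ)
        = V * ((1 / 2 : ℝ) • 1) * star V := by
      rw [Matrix.mul_smul, mul_one, Matrix.smul_mul, h1]
    rw [e1, e2, ← Matrix.add_mul, ← Matrix.mul_add]
    congr 2
    rw [aux_diagonal_sum, Matrix.smul_one_eq_diagonal, Matrix.diagonal_add]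
  rw [hrw, Matrix.star_eq_conjTranspose]
  exact (Matrix.PosSemidef.diagonal (fun i => hq _)).mul_mul_conjTranspose_same V

theorem stmt_8 {n δ k : ℕ} (G : SimpleGraph (Fin n))
    (hconn : G.Connected) (hreg : G.IsRegularOfDegree δ)
    (hk : Even k) (hkpos : 0 < k)
    (W : ℝ)
    (hW : IsGreatest
      {x : ℝ | ∃ u : Fin n, x = ∑ j ∈ Finset.Icc 1 k, ((G.adjMatrix ℝ) ^ j) u u} W) :
    (kIndepNum G k : ℝ) ≤
      n * (W + 1 / 2) / ((∑ j ∈ Finset.Icc 1 k, (δ : ℝ) ^ j) + 1 / 2) := by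
  classical
  have hn : 0 < n := by
    have h := hconn.nonempty
    exact Fin.pos_iff_nonempty.mpr h
  set A : Matrix (Fin n) (Fin n) ℝ := G.adjMatrix ℝ with hAdef
  -- extract a maximum k-independent set
  have hmem : kIndepNum G k ∈ {m | ∃ s : Finset (Fin n),
      (∀ u ∈ s, ∀ v ∈ s, u ≠ v → ∀ w : G.Walk u v, k < w.length) ∧ s.card = m} := by
    apply Nat.sSup_mem
    · exact ⟨0, ∅, by simp, rfl⟩
    · refine ⟨n, ?_⟩
      rintro m ⟨s, -, rfl⟩
      calc s.card ≤ Fintype.card (Fin n) := Finset.card_le_univ s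
      _ = n := Fintype.card_fin n
  obtain ⟨s, hs, hcard⟩ := hmem
  rw [← hcard]
  -- notation
  set B : Matrix (Fin n) (Fin n) ℝ := ∑ j ∈ Finset.Icc 1 k, A ^ j with hBdef
  set M : Matrix (Fin n) (Fin n) ℝ := B + (1 / 2 : ℝ) • 1 with hMdef
  set q : ℝ := (∑ j ∈ Finset.Icc 1 k, (δ : ℝ) ^ j) + 1 / 2 with hqdef
  set m : ℝ := (s.card : ℝ) with hmdef
  have hm0 : 0 ≤ m := Nat.cast_nonneg _
  have hq0 : 0 < q := by
    have : 0 ≤ ∑ j ∈ Finset.Icc 1 k, (δ : ℝ) ^ j :=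
      Finset.sum_nonneg fun j _ => pow_nonneg (Nat.cast_nonneg δ) j
    rw [hqdef]; linarith
  -- vectors
  set x : Fin n → ℝ := fun v => if v ∈ s then 1 else 0 with hxdef
  set o : Fin n → ℝ := fun _ => 1 with hodef
  -- A is symmetric
  have hAherm : A.IsHermitian := by
    rw [Matrix.IsHermitian, Matrix.conjTranspose_eq_transpose_of_trivial]
    exact G.isSymm_adjMatrix
  -- zero entries of powers between far-apart vertices
  have hBzero : ∀ u ∈ s, ∀ v ∈ s, u ≠ v → B u v = 0 := by
    intro u hu v hv huv
    rw [hBdef, Matrix.sum_apply]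
    refine Finset.sum_eq_zero fun j hj => ?_
    rw [Finset.mem_Icc] at hj
    rw [hAdef, SimpleGraph.adjMatrix_pow_apply_eq_card_walk]
    norm_cast
    rw [Fintype.card_eq_zero_iff]
    constructor
    rintro ⟨p, hp⟩
    have := hs u hu v hv huv p
    simp only [Set.mem_setOf_eq] at hp
    omega
  -- diagonal entries bounded by W
  have hdiag : ∀ u : Fin n, B u u ≤ W := by
    intro u
    apply hW.2
    refine ⟨u, ?_⟩
    simp [hBdef, Matrix.sum_apply]
  -- W is nonnegative
  have hW0 : 0 ≤ W := by
    obtain ⟨u, hu⟩ := hW.1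
    rw [hu]
    refine Finset.sum_nonneg fun j _ => ?_
    rw [SimpleGraph.adjMatrix_pow_apply_eq_card_walk]
    positivity
  -- x ⬝ᵥ (B *ᵥ x) = ∑_{u ∈ s} B u u
  have hxBx : x ⬝ᵥ (B *ᵥ x) = ∑ u ∈ s, B u u := by
    have h1 : x ⬝ᵥ (B *ᵥ x) = ∑ u ∈ s, ∑ v ∈ s, B u v := by
      simp only [dotProduct, Matrix.mulVec, hxdef, ite_mul, mul_ite, one_mul, mul_one,
        zero_mul, mul_zero, Finset.sum_ite_mem, Finset.univ_inter]
    rw [h1]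
    refine Finset.sum_congr rfl fun u hu => ?_
    exact Finset.sum_eq_single_of_mem u hu fun v hv hvu => hBzero u hu v hv (Ne.symm hvu)
  -- basic dot products
  have hox : o ⬝ᵥ x = m := by
    simp [dotProduct, hxdef, hodef, hmdef]
  have hxo : x ⬝ᵥ o = m := by
    simp [dotProduct, hxdef, hodef, hmdef]
  have hxx : x ⬝ᵥ x = m := by
    simp [dotProduct, hxdef, hmdef, ite_and]
  have hoo : o ⬝ᵥ o = (n : ℝ) := by
    simp [dotProduct, hodef]
  -- M *ᵥ o = q • o
  have hAo : A *ᵥ o = (δ : ℝ) • o := by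
    ext v
    rw [hAdef, hodef]
    simp [SimpleGraph.adjMatrix_mulVec_apply, hreg v]
  have hpowo : ∀ j : ℕ, (A ^ j) *ᵥ o = ((δ : ℝ) ^ j) • o := by
    intro j
    induction j with
    | zero => simp
    | succ j ih =>
      rw [pow_succ, ← Matrix.mulVec_mulVec, hAo, Matrix.mulVec_smul, ih, smul_smul, pow_succ]
      ring_nf
  have hMo : M *ᵥ o = q • o := by
    rw [hMdef, Matrix.add_mulVec, hBdef, aux_sum_mulVec, Matrix.smul_mulVec,
      Matrix.one_mulVec, hqdef]
    rw [Finset.sum_congr rfl fun j _ => hpowo j, ← Finset.sum_smul, add_smul]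
  -- M is symmetric
  have hMsymm : Mᵀ = M := by
    rw [hMdef, Matrix.transpose_add, Matrix.transpose_smul, Matrix.transpose_one, hBdef,
      Matrix.transpose_sum]
    congr 1
    refine Finset.sum_congr rfl fun j _ => ?_
    rw [Matrix.transpose_pow, hAdef, SimpleGraph.transpose_adjMatrix]
  have hoMx : o ⬝ᵥ (M *ᵥ x) = q * m := by
    rw [Matrix.dotProduct_mulVec, ← Matrix.mulVec_transpose, hMsymm, hMo,
      smul_dotProduct, hox, smul_eq_mul]
  have hxMo : x ⬝ᵥ (M *ᵥ o) = q * m := by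
    rw [hMo, dotProduct_smul, hxo, smul_eq_mul]
  have hoMo : o ⬝ᵥ (M *ᵥ o) = q * n := by
    rw [hMo, dotProduct_smul, hoo, smul_eq_mul]
  have hxMx : x ⬝ᵥ (M *ᵥ x) = (∑ u ∈ s, B u u) + m / 2 := by
    rw [hMdef, Matrix.add_mulVec, dotProduct_add, Matrix.smul_mulVec,
      Matrix.one_mulVec, dotProduct_smul, hxx, hxBx, smul_eq_mul]
    ring
  -- positive semidefiniteness
  have hPSD : M.PosSemidef := aux_psd A hAherm (aux_scalar_bound hk)
  set c : ℝ := m / n with hcdef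
  set y : Fin n → ℝ := x - c • o with hydef
  have hkey : 0 ≤ y ⬝ᵥ (M *ᵥ y) := by
    have h := hPSD.dotProduct_mulVec_nonneg y
    rwa [star_trivial] at h
  have hexp : y ⬝ᵥ (M *ᵥ y)
      = (∑ u ∈ s, B u u) + m / 2 - c * (q * m) - c * (q * m) + c * c * (q * n) := by
    simp only [hydef, Matrix.mulVec_sub, Matrix.mulVec_smul, hMo, sub_dotProduct,
      dotProduct_sub, smul_dotProduct, dotProduct_smul, smul_eq_mul,
      hxMx, hoMx, hxMo, hoMo, hxo, hox, hoo]
    ring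
  have hD : (∑ u ∈ s, B u u) ≤ m * W := by
    calc (∑ u ∈ s, B u u) ≤ ∑ u ∈ s, W := Finset.sum_le_sum fun u _ => hdiag u
    _ = m * W := by rw [Finset.sum_const, nsmul_eq_mul, hmdef]
  have hnR : (0 : ℝ) < n := by exact_mod_cast hn
  -- combine
  have hmain : m * m * q / n ≤ m * (W + 1 / 2) := by
    have h1 : 0 ≤ m * W + m / 2 - c * (q * m) - c * (q * m) + c * c * (q * n) := by
      have := hkey
      rw [hexp] at this
      linarith
    rw [hcdef] at h1
    have h2 : m / n * (q * m) + m / n * (q * m) - m / n * (m / n) * (q * n)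
        = m * m * q / n := by
      field_simp
      ring
    linarith [h2]
  rw [le_div_iff₀ hq0]
  rcases eq_or_lt_of_le hm0 with hm | hm
  · rw [← hm]
    have : (0:ℝ) ≤ (n : ℝ) * (W + 1 / 2) := by positivity
    linarith
  · have h3 : m * m * q ≤ n * (m * (W + 1 / 2)) := by
      rw [div_le_iff₀ hnR] at hmain
      linarith [hmain]
    nlinarith [h3, hm]
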